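/- Let (X,d) be a compact metric space and T: X → X a homeomorphism. For any δ > 0, the upper metric mean dimension satisfies mdim_M^upper(X, T, d) = limsup_{ε→0} [sup_{x∈X} S(B_δ(x, d_ℤ), ε)] / log(1/ε), and the analogous equality holds for the lower metric mean dimension with liminf in place of limsup. -/

import Mathlib

open Filter Set MeasureTheory

/-- Minimal cardinality of an `ε`-spanning set of `K` w.r.t. the (pseudo)metric `ρ`. -/
noncomputable def spanNum {X : Type*} (ρ : X → X → ℝ) (K : Set X) (ε : ℝ) : ℕ :=
  sInf {n : ℕ | ∃ S : Finset X, S.card = n ∧ ∀ x ∈ K, ∃ y ∈ S, ρ x y ≤ ε}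

/-- `d_Ω(x,y) = sup_{n ∈ Ω} d(Tⁿx, Tⁿy)` for a homeomorphism `T` and `Ω ⊆ ℤ`. -/
noncomputable def dOmZ {X : Type*} [MetricSpace X] (T : X ≃ₜ X) (Ω : Set ℤ) (x y : X) : ℝ :=
  ⨆ n : Ω, dist ((T.toEquiv ^ (n : ℤ)) x) ((T.toEquiv ^ (n : ℤ)) y)

/-- `d_N(x,y) = max_{0 ≤ n < N} d(Tⁿx, Tⁿy)`. -/
noncomputable def dN {X : Type*} [MetricSpace X] (T : X ≃ₜ X) (N : ℕ) : X → X → ℝ :=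
  dOmZ T {n : ℤ | 0 ≤ n ∧ n < (N : ℤ)}

/-- Entropy of `K` at scale `ε`: `limsup_{N→∞} (1/N) log #(K, d_N, ε)`. -/
noncomputable def entS {X : Type*} [MetricSpace X] (T : X ≃ₜ X) (K : Set X) (ε : ℝ) : ℝ :=
  limsup (fun N : ℕ => Real.log (spanNum (dN T N) K ε) / N) atTop

/-- The Bowen ball `B_δ(x, d_ℤ)`. -/
def bowenBallZ {X : Type*} [MetricSpace X] (T : X ≃ₜ X) (δ : ℝ) (x : X) : Set X :=
  {y | dOmZ T univ x y ≤ δ}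

/-- Upper metric mean dimension. -/
noncomputable def mdimMUpper {X : Type*} [MetricSpace X] (T : X ≃ₜ X) : ℝ :=
  limsup (fun ε : ℝ => entS T univ ε / Real.log (1 / ε)) (nhdsWithin 0 (Set.Ioi 0))

/-- Lower metric mean dimension. -/
noncomputable def mdimMLower {X : Type*} [MetricSpace X] (T : X ≃ₜ X) : ℝ :=
  liminf (fun ε : ℝ => entS T univ ε / Real.log (1 / ε)) (nhdsWithin 0 (Set.Ioi 0))

/-!
Every Bowen ball `B_δ(x, d_ℤ)` lies in `X`, so the local quantity is at most `S(X, ε)`.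
Conversely, Bowen's argument gives `S(X, 4ε) ≤ S(X, δ/2) + sup_x S(B_δ(x, d_ℤ), ε)`. If every
Bowen ball has entropy `< H` at scale `ε`, compactness yields `M` and `L` such that around every
point `z`, the points staying `δ/2`-close to the orbit of `z` during `[-M, M]` can be cut, on some
time block `[0, s)` with `s ≤ L`, into `e^{sH}` pieces of `d_s`-diameter `≤ 4ε`. Cutting `[0, N)`
greedily into such blocks (plus at most `2M + L` single times) covers every `d_N`-ball of radius
`δ/2` by `C · e^{NH}` pieces, so `#(X, d_N, 4ε) ≤ #(X, d_N, δ/2) · C · e^{NH}`. After division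
by `log (1/ε)` the constant `S(X, δ/2)` disappears and `log (4/ε) / log (1/ε) → 1`, so both
ratios have the same `limsup` and `liminf`.
-/

open Topology

lemma Real.log_natCast_le_log_natCast {m n : ℕ} (h : m ≤ n) : Real.log m ≤ Real.log n := by
  rcases m.eq_zero_or_pos with rfl | hm
  · simpa using Real.log_natCast_nonneg n
  · exact Real.log_le_log (by exact_mod_cast hm) (by exact_mod_cast h)

lemma Filter.limsup_le_limsup_add_of_tendsto {ι : Type*} {f : Filter ι} [f.NeBot]
    {u v w : ι → ℝ} {c : ℝ} (h : ∀ᶠ i in f, u i ≤ v i + w i)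
    (hu : IsCoboundedUnder (· ≤ ·) f u)
    (hv : IsBoundedUnder (· ≤ ·) f v) (hv' : IsBoundedUnder (· ≥ ·) f v)
    (hw : Tendsto w f (𝓝 c)) : limsup u f ≤ limsup v f + c := by
  calc limsup u f ≤ limsup (v + w) f :=
        limsup_le_limsup h hu (isBoundedUnder_le_add hv hw.isBoundedUnder_le)
    _ ≤ limsup v f + limsup w f :=
        limsup_add_le hv' hv hw.isCoboundedUnder_le hw.isBoundedUnder_le
    _ = limsup v f + c := by rw [hw.limsup_eq]

lemma Real.sInf_eq_sInf_of_forall_add_mem {S T : Set ℝ} (hTS : T ⊆ S) (hS : BddBelow S)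
    (h : ∀ b ∈ S, ∀ κ > 0, b + κ ∈ T) : sInf T = sInf S := by
  rcases S.eq_empty_or_nonempty with rfl | ⟨b₀, hb₀⟩
  · rw [subset_empty_iff.1 hTS]
  refine le_antisymm (le_of_forall_pos_le_add fun κ hκ => ?_)
    (csInf_le_csInf hS ⟨_, h b₀ hb₀ 1 one_pos⟩ hTS)
  obtain ⟨b, hb, hbS⟩ :=
    exists_lt_of_csInf_lt ⟨b₀, hb₀⟩ (lt_add_of_pos_right (sInf S) (half_pos hκ))
  have := csInf_le (hS.mono hTS) (h b hb _ (half_pos hκ))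
  linarith

lemma Real.sSup_eq_sSup_of_forall_sub_mem {S T : Set ℝ} (hST : S ⊆ T) (hS : S.Nonempty)
    (h : ∀ b ∈ T, ∀ κ > 0, b - κ ∈ S) : sSup S = sSup T := by
  by_cases hT : BddAbove T
  · refine le_antisymm (csSup_le_csSup hT hS hST) (le_of_forall_pos_le_add fun κ hκ => ?_)
    obtain ⟨b, hb, hbT⟩ :=
      exists_lt_of_lt_csSup (hS.mono hST) (sub_lt_self (sSup T) (half_pos hκ))
    have := le_csSup (hT.mono hST) (h b hb _ (half_pos hκ))
    linarith
  · have hS' : ¬BddAbove S := fun ⟨c, hc⟩ =>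
      hT ⟨c + 1, fun b hb => by linarith [hc (h b hb 1 one_pos)]⟩
    rw [Real.sSup_of_not_bddAbove hT, Real.sSup_of_not_bddAbove hS']

lemma Filter.limsup_eq_and_liminf_eq_of_le_mul_comp_add {α : Type*} {F : Filter α} [F.NeBot]
    {u v a c : α → ℝ} {φ : α → α} (hφ : map φ F = F) (hu : ∀ᶠ x in F, 0 ≤ u x)
    (huv : ∀ᶠ x in F, u x ≤ v x) (hvu : ∀ᶠ x in F, v x ≤ a x * u (φ x) + c x)
    (ha : Tendsto a F (𝓝 1)) (hc : Tendsto c F (𝓝 0)) :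
    limsup v F = limsup u F ∧ liminf v F = liminf u F := by
  have ha0 : ∀ᶠ x in F, 0 < a x := ha.eventually (lt_mem_nhds one_pos)
  constructor
  · rw [limsup_eq, limsup_eq]
    refine Real.sInf_eq_sInf_of_forall_add_mem
      (fun b hb => (huv.and hb).mono fun x h => h.1.trans h.2)
      ⟨0, fun b hb => ?_⟩ fun b hb κ hκ => ?_
    · obtain ⟨x, hx, hxb⟩ := (hu.and hb).exists
      exact hx.trans hxb
    · rw [mem_ofPred_eq, ← hφ, eventually_map] at hb
      have hlim : Tendsto (fun x => a x * b + c x) F (𝓝 b) := by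
        simpa using (ha.mul_const b).add hc
      filter_upwards [hvu, hb, ha0, hlim.eventually_lt_const (lt_add_of_pos_right b hκ)]
        with x hvx hbx hax hlimx
      exact hvx.trans ((add_le_add_left (mul_le_mul_of_nonneg_left hbx hax.le) _).trans hlimx.le)
  · rw [liminf_eq, liminf_eq]
    refine (Real.sSup_eq_sSup_of_forall_sub_mem (S := {b | ∀ᶠ x in F, b ≤ u x})
      (T := {b | ∀ᶠ x in F, b ≤ v x}) (fun b hb => (huv.and hb).mono fun x h => h.2.trans h.1)
      ⟨0, hu⟩ fun b hb κ hκ => ?_).symm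
    have hlim : Tendsto (fun x => (b - c x) / a x) F (𝓝 b) := by
      have h := ((tendsto_const_nhds (x := b)).sub hc).div ha one_ne_zero
      rwa [sub_zero, div_one] at h
    show ∀ᶠ x in F, b - κ ≤ u x
    rw [← hφ, eventually_map]
    filter_upwards [hb, hvu, ha0, hlim.eventually_const_lt (sub_lt_self b hκ)]
      with x hbx hvx hax hlimx
    refine hlimx.le.trans ((div_le_iff₀ hax).2 ?_)
    linarith [mul_comm (a x) (u (φ x))]

lemma Filter.map_div_const_nhdsGT_zero {c : ℝ} (hc : 0 < c) :
    map (· / c) (𝓝[>] (0 : ℝ)) = 𝓝[>] 0 := by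
  rw [map_eq_comap_of_inverse (n := (c * ·)) (by ext; simp [hc.ne'])
      (by ext; simp [mul_div_cancel₀ _ hc.ne']),
    comap_mulLeft_nhdsGT_zero hc]

lemma tendsto_log_one_div_nhdsGT_zero :
    Tendsto (fun ε : ℝ => Real.log (1 / ε)) (𝓝[>] 0) atTop := by
  have h := Real.tendsto_log_atTop.comp (tendsto_inv_nhdsGT_zero (𝕜 := ℝ))
  simpa only [one_div, Function.comp_def] using h

lemma tendsto_log_one_div_div_const_div_log_one_div {c : ℝ} (hc : 0 < c) :
    Tendsto (fun ε : ℝ => Real.log (1 / (ε / c)) / Real.log (1 / ε)) (𝓝[>] 0) (𝓝 1) := by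
  have h := (tendsto_const_nhds (x := (1 : ℝ))).add
    ((tendsto_const_nhds (x := Real.log c)).div_atTop tendsto_log_one_div_nhdsGT_zero)
  rw [add_zero] at h
  refine h.congr' ?_
  filter_upwards [Ioo_mem_nhdsGT one_pos] with ε ⟨hε0, hε1⟩
  have hL : 0 < Real.log (1 / ε) := Real.log_pos ((one_lt_div hε0).2 hε1)
  rw [one_div_div, div_eq_mul_one_div c ε, Real.log_mul hc.ne' (by positivity)]
  field_simp
  ring

namespace Homeomorph

variable {X : Type*} [TopologicalSpace X]

lemma toEquiv_zpow (T : X ≃ₜ X) (n : ℤ) : (T ^ n).toEquiv = T.toEquiv ^ n :=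
  map_zpow (⟨⟨Homeomorph.toEquiv, rfl⟩, fun _ _ => rfl⟩ : (X ≃ₜ X) →* Equiv.Perm X) T
    n

lemma continuous_toEquiv_zpow (T : X ≃ₜ X) (n : ℤ) : Continuous ⇑(T.toEquiv ^ n) := by
  rw [← toEquiv_zpow]
  exact (T ^ n).continuous

end Homeomorph

section OrbitDistance

variable {X : Type*} [MetricSpace X] (T : X ≃ₜ X)

lemma dOmZ_nonneg (Ω : Set ℤ) (x y : X) : 0 ≤ dOmZ T Ω x y :=
  Real.iSup_nonneg fun _ => dist_nonneg

lemma dOmZ_comm (Ω : Set ℤ) (x y : X) : dOmZ T Ω x y = dOmZ T Ω y x := by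
  simp only [dOmZ, dist_comm]

variable [BoundedSpace X]

lemma dOmZ_le_iff {Ω : Set ℤ} {x y : X} {r : ℝ} (hr : 0 ≤ r) :
    dOmZ T Ω x y ≤ r ↔ ∀ n ∈ Ω, dist ((T.toEquiv ^ n) x) ((T.toEquiv ^ n) y) ≤ r := by
  obtain ⟨C, hC⟩ := Metric.isBounded_iff.1 (BoundedSpace.bounded_univ (α := X))
  have hbdd : BddAbove (range fun n : Ω =>
      dist ((T.toEquiv ^ (n : ℤ)) x) ((T.toEquiv ^ (n : ℤ)) y)) :=
    ⟨C, by rintro - ⟨n, rfl⟩; exact hC (mem_univ _) (mem_univ _)⟩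
  exact ⟨fun h n hn => (le_ciSup hbdd ⟨n, hn⟩).trans h,
    fun h => Real.iSup_le (fun n => h n n.2) hr⟩

lemma dist_le_dOmZ {Ω : Set ℤ} {n : ℤ} (hn : n ∈ Ω) (x y : X) :
    dist ((T.toEquiv ^ n) x) ((T.toEquiv ^ n) y) ≤ dOmZ T Ω x y :=
  (dOmZ_le_iff T (dOmZ_nonneg T Ω x y)).1 le_rfl n hn

lemma dOmZ_triangle (Ω : Set ℤ) (x y z : X) :
    dOmZ T Ω x z ≤ dOmZ T Ω x y + dOmZ T Ω y z :=
  (dOmZ_le_iff T (add_nonneg (dOmZ_nonneg T Ω x y) (dOmZ_nonneg T Ω y z))).2 fun _ hn =>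
    (dist_triangle _ _ _).trans (add_le_add (dist_le_dOmZ T hn x y) (dist_le_dOmZ T hn y z))

lemma dOmZ_mono {Ω Ω' : Set ℤ} (h : Ω ⊆ Ω') (x y : X) : dOmZ T Ω x y ≤ dOmZ T Ω' x y :=
  (dOmZ_le_iff T (dOmZ_nonneg T Ω' x y)).2 fun _ hn => dist_le_dOmZ T (h hn) x y

lemma dOmZ_zpow_le {Ω Ω' : Set ℤ} {t : ℤ} (h : ∀ n ∈ Ω, n + t ∈ Ω') (x y : X) :
    dOmZ T Ω ((T.toEquiv ^ t) x) ((T.toEquiv ^ t) y) ≤ dOmZ T Ω' x y := by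
  refine (dOmZ_le_iff T (dOmZ_nonneg T Ω' x y)).2 fun n hn => ?_
  simp only [← Equiv.Perm.mul_apply, ← zpow_add]
  exact dist_le_dOmZ T (h n hn) x y

lemma mem_bowenBallZ_iff {δ : ℝ} (hδ : 0 ≤ δ) {x y : X} :
    y ∈ bowenBallZ T δ x ↔
      ∀ n : ℤ, dist ((T.toEquiv ^ n) x) ((T.toEquiv ^ n) y) ≤ δ := by
  simp [bowenBallZ, dOmZ_le_iff T hδ]

lemma self_mem_bowenBallZ {δ : ℝ} (hδ : 0 ≤ δ) (x : X) : x ∈ bowenBallZ T δ x := by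
  simpa [mem_bowenBallZ_iff T hδ] using hδ

end OrbitDistance

section Spanning

variable {X : Type*} {ρ : X → X → ℝ} {K : Set X} {ε : ℝ}

lemma spanNum_le_card (S : Finset X) (hS : ∀ x ∈ K, ∃ y ∈ S, ρ x y ≤ ε) :
    spanNum ρ K ε ≤ S.card :=
  Nat.sInf_le ⟨S, rfl, hS⟩

lemma exists_card_eq_spanNum (S : Finset X) (hS : ∀ x ∈ K, ∃ y ∈ S, ρ x y ≤ ε) :
    ∃ S' : Finset X, S'.card = spanNum ρ K ε ∧ ∀ x ∈ K, ∃ y ∈ S', ρ x y ≤ ε :=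
  Nat.sInf_mem (s := {n | ∃ S : Finset X, S.card = n ∧ ∀ x ∈ K, ∃ y ∈ S, ρ x y ≤ ε})
    ⟨S.card, S, rfl, hS⟩

lemma spanNum_mono {K' : Set X} (h : K ⊆ K') (S : Finset X)
    (hS : ∀ x ∈ K', ∃ y ∈ S, ρ x y ≤ ε) : spanNum ρ K ε ≤ spanNum ρ K' ε := by
  obtain ⟨S', hcard, hS'⟩ := exists_card_eq_spanNum S hS
  exact hcard ▸ spanNum_le_card S' fun x hx => hS' x (h hx)

lemma spanNum_pos (hK : K.Nonempty) (S : Finset X) (hS : ∀ x ∈ K, ∃ y ∈ S, ρ x y ≤ ε) :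
    0 < spanNum ρ K ε := by
  obtain ⟨S', hcard, hS'⟩ := exists_card_eq_spanNum S hS
  obtain ⟨x, hx⟩ := hK
  obtain ⟨y, hy, -⟩ := hS' x hx
  rw [← hcard]
  exact Finset.card_pos.2 ⟨y, hy⟩

end Spanning

section DiamCover

variable {X : Type*} [MetricSpace X] (T : X ≃ₜ X)

/-- Unlike spanning sets, such covers multiply over unions of time windows `Ω` without enlarging
the scale `r`. -/
def DiamCoverable (Ω : Set ℤ) (K : Set X) (r B : ℝ) : Prop :=
  ∃ P : Finset (Set X), (P.card : ℝ) ≤ B ∧ K ⊆ ⋃₀ ↑P ∧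
    ∀ U ∈ P, ∀ x ∈ U, ∀ y ∈ U, dOmZ T Ω x y ≤ r

variable {T}

lemma DiamCoverable.mono [BoundedSpace X] {Ω Ω' : Set ℤ} {K K' : Set X} {r B B' : ℝ}
    (h : DiamCoverable T Ω K r B) (hΩ : Ω' ⊆ Ω) (hK : K' ⊆ K) (hB : B ≤ B') :
    DiamCoverable T Ω' K' r B' := by
  obtain ⟨P, hcard, hcover, hdiam⟩ := h
  exact ⟨P, hcard.trans hB, hK.trans hcover, fun U hU x hx y hy =>
    (dOmZ_mono T hΩ x y).trans (hdiam U hU x hx y hy)⟩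

lemma DiamCoverable.union [BoundedSpace X] {Ω₁ Ω₂ : Set ℤ} {K : Set X} {r B₁ B₂ : ℝ}
    (h₁ : DiamCoverable T Ω₁ K r B₁) (h₂ : DiamCoverable T Ω₂ K r B₂) (hr : 0 ≤ r) :
    DiamCoverable T (Ω₁ ∪ Ω₂) K r (B₁ * B₂) := by
  classical
  obtain ⟨P₁, hcard₁, hcover₁, hdiam₁⟩ := h₁
  obtain ⟨P₂, hcard₂, hcover₂, hdiam₂⟩ := h₂
  refine ⟨Finset.image₂ (· ∩ ·) P₁ P₂, ?_, fun x hx => ?_, ?_⟩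
  · calc ((Finset.image₂ (· ∩ ·) P₁ P₂).card : ℝ) ≤ (P₁.card * P₂.card : ℕ) :=
          Nat.cast_le.2 (Finset.card_image₂_le _ _ _)
      _ ≤ B₁ * B₂ := by
          push_cast
          exact mul_le_mul hcard₁ hcard₂ (Nat.cast_nonneg _)
            ((Nat.cast_nonneg _).trans hcard₁)
  · obtain ⟨U₁, hU₁, hx₁⟩ := hcover₁ hx
    obtain ⟨U₂, hU₂, hx₂⟩ := hcover₂ hx
    exact ⟨U₁ ∩ U₂, Finset.mem_image₂_of_mem hU₁ hU₂, hx₁, hx₂⟩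
  · simp only [Finset.mem_image₂]
    rintro - ⟨U₁, hU₁, U₂, hU₂, rfl⟩ x ⟨hx₁, hx₂⟩ y ⟨hy₁, hy₂⟩
    rw [dOmZ_le_iff T hr]
    rintro n (hn | hn)
    · exact (dist_le_dOmZ T hn x y).trans (hdiam₁ U₁ hU₁ x hx₁ y hy₁)
    · exact (dist_le_dOmZ T hn x y).trans (hdiam₂ U₂ hU₂ x hx₂ y hy₂)

lemma DiamCoverable.biUnion {ι : Type*} {W : Finset ι} {Ω : Set ℤ} {K : ι → Set X}
    {r B : ℝ} (h : ∀ i ∈ W, DiamCoverable T Ω (K i) r B) :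
    DiamCoverable T Ω (⋃ i ∈ W, K i) r (W.card * B) := by
  classical
  choose! P hcard hcover hdiam using h
  refine ⟨W.biUnion P, ?_, ?_, ?_⟩
  · calc ((W.biUnion P).card : ℝ) ≤ ∑ i ∈ W, ((P i).card : ℝ) := by
          exact_mod_cast Finset.card_biUnion_le
      _ ≤ ∑ _i ∈ W, B := Finset.sum_le_sum hcard
      _ = W.card * B := by rw [Finset.sum_const, nsmul_eq_mul]
  · refine iUnion₂_subset fun i hi x hx => ?_
    obtain ⟨U, hU, hxU⟩ := hcover i hi hx
    exact ⟨U, Finset.mem_biUnion.2 ⟨i, hi, hU⟩, hxU⟩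
  · intro U hU
    obtain ⟨i, hi, hUi⟩ := Finset.mem_biUnion.1 hU
    exact hdiam i hi U hUi

lemma DiamCoverable.preimage_zpow [BoundedSpace X] {Ω Ω' : Set ℤ} {K : Set X} {r B : ℝ}
    {t : ℤ} (h : DiamCoverable T Ω K r B) (hΩ : ∀ n ∈ Ω', n - t ∈ Ω) :
    DiamCoverable T Ω' ((T.toEquiv ^ t) ⁻¹' K) r B := by
  classical
  obtain ⟨P, hcard, hcover, hdiam⟩ := h
  refine ⟨P.image (fun U => (T.toEquiv ^ t) ⁻¹' U),
    (Nat.cast_le.2 Finset.card_image_le).trans hcard, fun x hx => ?_, ?_⟩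
  · obtain ⟨U, hU, hxU⟩ := hcover hx
    exact ⟨_, Finset.mem_image_of_mem _ hU, hxU⟩
  · simp only [Finset.mem_image]
    rintro - ⟨U, hU, rfl⟩ x hx y hy
    have hinv : ∀ z : X, (T.toEquiv ^ (-t)) ((T.toEquiv ^ t) z) = z := fun z => by
      rw [← Equiv.Perm.mul_apply, ← zpow_add, neg_add_cancel, zpow_zero, Equiv.Perm.one_apply]
    rw [← hinv x, ← hinv y]
    exact (dOmZ_zpow_le T hΩ _ _).trans (hdiam U hU _ hx _ hy)

lemma diamCoverable_of_span [BoundedSpace X] {Ω : Set ℤ} {K : Set X} {r : ℝ} (S : Finset X)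
    (hS : ∀ x ∈ K, ∃ y ∈ S, dOmZ T Ω x y ≤ r) :
    DiamCoverable T Ω K (2 * r) S.card := by
  classical
  refine ⟨S.image (fun y => {x | dOmZ T Ω x y ≤ r}), Nat.cast_le.2 Finset.card_image_le,
    fun x hx => ?_, ?_⟩
  · obtain ⟨y, hy, hxy⟩ := hS x hx
    exact ⟨_, Finset.mem_image_of_mem _ hy, hxy⟩
  · simp only [Finset.mem_image]
    rintro - ⟨z, -, rfl⟩ x hx y hy
    calc dOmZ T Ω x y ≤ dOmZ T Ω x z + dOmZ T Ω z y := dOmZ_triangle T Ω x z y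
      _ ≤ 2 * r := by rw [dOmZ_comm T Ω z y]; linarith [hx.out, hy.out]

lemma DiamCoverable.exists_span {Ω : Set ℤ} {K : Set X} {r B : ℝ}
    (h : DiamCoverable T Ω K r B) :
    ∃ S : Finset X, (S.card : ℝ) ≤ B ∧ ∀ x ∈ K, ∃ y ∈ S, dOmZ T Ω x y ≤ r := by
  classical
  obtain ⟨P, hcard, hcover, hdiam⟩ := h
  rcases K.eq_empty_or_nonempty with rfl | ⟨x₀, -⟩
  · exact ⟨∅, by simpa using (Nat.cast_nonneg _).trans hcard, by simp⟩
  let pick : Set X → X := fun U => if hU : U.Nonempty then hU.some else x₀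
  refine ⟨P.image pick, (Nat.cast_le.2 Finset.card_image_le).trans hcard, fun x hx => ?_⟩
  obtain ⟨U, hU, hxU⟩ := hcover hx
  have hne : U.Nonempty := ⟨x, hxU⟩
  refine ⟨pick U, Finset.mem_image_of_mem _ hU, hdiam U hU x hxU _ ?_⟩
  simpa [pick, hne] using hne.some_mem

lemma spanNum_le_of_diamCoverable {Ω : Set ℤ} {K : Set X} {r B : ℝ}
    (h : DiamCoverable T Ω K r B) : (spanNum (dOmZ T Ω) K r : ℝ) ≤ B := by
  obtain ⟨S, hcard, hS⟩ := h.exists_span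
  exact (Nat.cast_le.2 (spanNum_le_card S hS)).trans hcard

end DiamCover

section Nets

variable {X : Type*} [MetricSpace X] (T : X ≃ₜ X)

lemma exists_finset_dist_le [CompactSpace X] {r : ℝ} (hr : 0 < r) :
    ∃ A : Finset X, ∀ x : X, ∃ a ∈ A, dist x a ≤ r := by
  obtain ⟨A, -, hA⟩ := (isCompact_univ (X := X)).elim_nhds_subcover (fun x => Metric.ball x r)
    fun x _ => Metric.ball_mem_nhds x hr
  refine ⟨A, fun x => ?_⟩
  obtain ⟨a, ha, hxa⟩ := mem_iUnion₂.1 (hA (mem_univ x))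
  exact ⟨a, ha, (Metric.mem_ball.1 hxa).le⟩

lemma one_le_card_of_forall_exists_dist_le [Nonempty X] {A : Finset X} {r : ℝ}
    (hA : ∀ x : X, ∃ a ∈ A, dist x a ≤ r) : (1 : ℝ) ≤ A.card := by
  obtain ⟨a, ha, -⟩ := hA (Classical.arbitrary X)
  exact_mod_cast Finset.card_pos.2 ⟨a, ha⟩

variable {T} [BoundedSpace X] {A : Finset X} {r : ℝ}

lemma diamCoverable_singleton_of_net (hA : ∀ x : X, ∃ a ∈ A, dist x a ≤ r / 2) (n : ℤ)
    (K : Set X) : DiamCoverable T {n} K r A.card := by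
  classical
  refine ⟨A.image fun a => (T.toEquiv ^ n) ⁻¹' Metric.closedBall a (r / 2),
    Nat.cast_le.2 Finset.card_image_le, fun x _ => ?_, ?_⟩
  · obtain ⟨a, ha, hxa⟩ := hA ((T.toEquiv ^ n) x)
    exact ⟨_, Finset.mem_image_of_mem _ ha, Metric.mem_closedBall.2 hxa⟩
  · simp only [Finset.mem_image]
    rintro - ⟨a, -, rfl⟩ x hx y hy
    have hr : 0 ≤ r := by
      linarith [dist_nonneg.trans (Metric.mem_closedBall.1 hx)]
    refine (dOmZ_le_iff T hr).2 fun m hm => ?_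
    rw [mem_singleton_iff.1 hm]
    calc dist ((T.toEquiv ^ n) x) ((T.toEquiv ^ n) y)
        ≤ dist ((T.toEquiv ^ n) x) a + dist ((T.toEquiv ^ n) y) a := dist_triangle_right _ _ _
      _ ≤ r := by linarith [Metric.mem_closedBall.1 hx, Metric.mem_closedBall.1 hy]

lemma diamCoverable_finset_of_net (hA : ∀ x : X, ∃ a ∈ A, dist x a ≤ r / 2) (hr : 0 ≤ r)
    (F : Finset ℤ) (K : Set X) : DiamCoverable T F K r ((A.card : ℝ) ^ F.card) := by
  classical
  induction F using Finset.induction_on with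
  | empty => exact ⟨{univ}, by simp, by simp, fun _ _ _ _ _ _ => (dOmZ_le_iff T hr).2 (by simp)⟩
  | insert n F hn ih =>
    rw [Finset.coe_insert, insert_eq, Finset.card_insert_of_notMem hn, pow_succ']
    exact (diamCoverable_singleton_of_net hA n K).union ih hr

lemma diamCoverable_Ico_of_net (hA : ∀ x : X, ∃ a ∈ A, dist x a ≤ r / 2) (hr : 0 ≤ r)
    (a b : ℤ) (K : Set X) : DiamCoverable T (Ico a b) K r ((A.card : ℝ) ^ (b - a).toNat) := by
  simpa using diamCoverable_finset_of_net (T := T) hA hr (Finset.Ico a b) K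

lemma spanNum_dN_le_pow (hA : ∀ x : X, ∃ a ∈ A, dist x a ≤ r / 2) (hr : 0 ≤ r) (N : ℕ)
    (K : Set X) : (spanNum (dN T N) K r : ℝ) ≤ (A.card : ℝ) ^ N := by
  have h := spanNum_le_of_diamCoverable (diamCoverable_Ico_of_net (T := T) hA hr 0 N K)
  rw [sub_zero, Int.toNat_natCast] at h
  exact h

variable [CompactSpace X]

lemma exists_finset_dN_le (hr : 0 < r) (N : ℕ) :
    ∃ S : Finset X, ∀ x : X, ∃ y ∈ S, dN T N x y ≤ r := by
  obtain ⟨A, hA⟩ := exists_finset_dist_le (X := X) (half_pos hr)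
  obtain ⟨S, -, hS⟩ := (diamCoverable_Ico_of_net (T := T) hA hr.le 0 N univ).exists_span
  exact ⟨S, fun x => hS x (mem_univ x)⟩

end Nets

section Entropy

variable {X : Type*} [MetricSpace X] {T : X ≃ₜ X}

lemma log_spanNum_div_nonneg (K : Set X) (ε : ℝ) (N : ℕ) :
    0 ≤ Real.log (spanNum (dN T N) K ε) / N :=
  div_nonneg (Real.log_natCast_nonneg _) (Nat.cast_nonneg N)

lemma entS_of_isEmpty [IsEmpty X] (K : Set X) (ε : ℝ) : entS T K ε = 0 := by
  have h : ∀ N, spanNum (dN T N) K ε = 0 := fun N =>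
    Nat.eq_zero_of_le_zero (spanNum_le_card ∅ fun x => isEmptyElim x)
  simp [entS, h]

lemma isCoboundedUnder_log_spanNum_div (K : Set X) (ε : ℝ) :
    IsCoboundedUnder (· ≤ ·) atTop fun N : ℕ => Real.log (spanNum (dN T N) K ε) / N :=
  isCoboundedUnder_le_of_le atTop (log_spanNum_div_nonneg K ε)

lemma entS_nonneg (K : Set X) (ε : ℝ) : 0 ≤ entS T K ε := by
  rw [entS, limsup_eq]
  refine Real.sInf_nonneg fun a ha => ?_
  obtain ⟨N, hN⟩ := ha.exists
  exact (log_spanNum_div_nonneg K ε N).trans hN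

lemma log_spanNum_div_le [BoundedSpace X] {A : Finset X} {r : ℝ}
    (hA : ∀ x : X, ∃ a ∈ A, dist x a ≤ r / 2) (hr : 0 ≤ r) (K : Set X) (N : ℕ) :
    Real.log (spanNum (dN T N) K r) / N ≤ Real.log A.card := by
  rcases N.eq_zero_or_pos with rfl | hN
  · simpa using Real.log_natCast_nonneg _
  have hpow : spanNum (dN T N) K r ≤ A.card ^ N := by
    exact_mod_cast spanNum_dN_le_pow (T := T) hA hr N K
  rw [div_le_iff₀ (by exact_mod_cast hN), mul_comm, ← Real.log_pow]
  exact_mod_cast Real.log_natCast_le_log_natCast hpow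

variable [CompactSpace X]

lemma isBoundedUnder_log_spanNum_div (K : Set X) {ε : ℝ} (hε : 0 < ε) :
    IsBoundedUnder (· ≤ ·) atTop fun N : ℕ => Real.log (spanNum (dN T N) K ε) / N := by
  obtain ⟨A, hA⟩ := exists_finset_dist_le (X := X) (half_pos hε)
  exact isBoundedUnder_of ⟨_, log_spanNum_div_le hA hε.le K⟩

lemma entS_le_log_card {A : Finset X} {r : ℝ} (hA : ∀ x : X, ∃ a ∈ A, dist x a ≤ r / 2)
    (hr : 0 ≤ r) (K : Set X) : entS T K r ≤ Real.log A.card :=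
  limsup_le_of_le (isCoboundedUnder_log_spanNum_div K r)
    (Eventually.of_forall (log_spanNum_div_le hA hr K))

lemma entS_mono {K K' : Set X} (h : K ⊆ K') {ε : ℝ} (hε : 0 < ε) :
    entS T K ε ≤ entS T K' ε := by
  refine limsup_le_limsup (Eventually.of_forall fun N => ?_)
    (isCoboundedUnder_log_spanNum_div K ε) (isBoundedUnder_log_spanNum_div K' hε)
  obtain ⟨S, hS⟩ := exists_finset_dN_le (T := T) hε N
  exact div_le_div_of_nonneg_right
    (Real.log_natCast_le_log_natCast (spanNum_mono h S fun x _ => hS x)) (Nat.cast_nonneg N)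

end Entropy

section Local

variable {X : Type*} [MetricSpace X] [CompactSpace X] {T : X ≃ₜ X}

lemma isClosed_setOf_dOmZ_le (Ω : Set ℤ) (x : X) {δ : ℝ} (hδ : 0 ≤ δ) :
    IsClosed {y | dOmZ T Ω x y ≤ δ} := by
  simp_rw [dOmZ_le_iff T hδ, ofPred_forall]
  exact isClosed_biInter fun n _ =>
    isClosed_le (continuous_const.dist (T.continuous_toEquiv_zpow n)) continuous_const

lemma exists_window_forall_exists_dN_le {x : X} {δ r : ℝ} (hδ : 0 ≤ δ) (hr : 0 < r) {N : ℕ}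
    {E : Finset X} (hE : ∀ y ∈ bowenBallZ T δ x, ∃ e ∈ E, dN T N y e ≤ r) :
    ∃ m : ℕ, ∀ y, dOmZ T (Icc (-m) m) x y ≤ δ → ∃ e ∈ E, dN T N y e ≤ 2 * r := by
  let V : ℕ → Set X := fun m => {y | dOmZ T (Icc (-m) m) x y ≤ δ}
  -- the slack from `r` to `2 * r` makes `U` an open neighbourhood of `⋂ m, V m ⊆ bowenBallZ T δ x`
  let U : Set X := ⋃ e ∈ E, ⋂ n ∈ Ico (0 : ℤ) N,
    {y | dist ((T.toEquiv ^ n) y) ((T.toEquiv ^ n) e) < 2 * r}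
  have hU : IsOpen U := isOpen_biUnion fun e _ => (finite_Ico _ _).isOpen_biInter fun n _ =>
    isOpen_lt ((T.continuous_toEquiv_zpow n).dist continuous_const) continuous_const
  have hV : Directed (· ⊇ ·) V := Antitone.directed_ge fun m m' hmm' y hy =>
    (dOmZ_mono T (Icc_subset_Icc (by omega) (by omega)) x y).trans hy
  have hVU : ⋂ m, V m ⊆ U := by
    intro y hy
    obtain ⟨e, he, hye⟩ := hE y ((mem_bowenBallZ_iff T hδ).2 fun n =>
      (dist_le_dOmZ T (⟨by omega, by omega⟩ : n ∈ Icc (-(n.natAbs : ℤ)) n.natAbs)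
        x y).trans (mem_iInter.1 hy n.natAbs))
    refine mem_biUnion he (mem_iInter₂.2 fun n hn => ?_)
    exact (dist_le_dOmZ T hn y e).trans_lt (hye.trans_lt (by linarith))
  obtain ⟨m, hm⟩ := exists_subset_nhds_of_isCompact' hV
    (fun m => (isClosed_setOf_dOmZ_le _ x hδ).isCompact) (fun m => isClosed_setOf_dOmZ_le _ x hδ)
    fun y hy => hU.mem_nhds (hVU hy)
  refine ⟨m, fun y hy => ?_⟩
  obtain ⟨e, he, hye⟩ := mem_iUnion₂.1 (hm hy)
  exact ⟨e, he, (dOmZ_le_iff T (by linarith)).2 fun n hn => (mem_iInter₂.1 hye n hn).le⟩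

lemma exists_diamCoverable_of_entS_lt {δ ε H : ℝ} (hδ : 0 < δ) (hε : 0 < ε) (x : X)
    (hH : entS T (bowenBallZ T δ x) ε < H) :
    ∃ m s : ℕ, 1 ≤ s ∧
      DiamCoverable T (Ico 0 s) {y | dOmZ T (Icc (-m) m) x y ≤ δ} (4 * ε)
        (Real.exp (H * s)) := by
  obtain ⟨s, hsH, hs⟩ := ((eventually_lt_of_limsup_lt hH
    (isBoundedUnder_log_spanNum_div _ hε)).and (eventually_ge_atTop 1)).exists
  obtain ⟨S, hS⟩ := exists_finset_dN_le (T := T) hε s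
  obtain ⟨E, hEcard, hE⟩ := exists_card_eq_spanNum S fun y _ => hS y
  obtain ⟨m, hm⟩ := exists_window_forall_exists_dN_le hδ.le hε hE
  have hpos : (0 : ℝ) < E.card := by
    rw [hEcard]
    exact_mod_cast spanNum_pos ⟨x, self_mem_bowenBallZ T hδ.le x⟩ S fun y _ => hS y
  have hcard : (E.card : ℝ) ≤ Real.exp (H * s) := by
    rw [← Real.log_le_iff_le_exp hpos, hEcard]
    exact ((div_lt_iff₀ (by exact_mod_cast hs)).1 hsH).le
  refine ⟨m, s, hs, ?_⟩
  have h := (diamCoverable_of_span (T := T) E fun y hy => hm y hy).mono subset_rfl subset_rfl hcard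
  rwa [← mul_assoc, show (2 : ℝ) * 2 = 4 by norm_num] at h

lemma exists_uniform_diamCoverable {δ ε H : ℝ} (hδ : 0 < δ) (hε : 0 < ε)
    (hH : ∀ x, entS T (bowenBallZ T δ x) ε < H) :
    ∃ M L : ℕ, ∀ z : X, ∃ s : ℕ, 1 ≤ s ∧ s ≤ L ∧
      DiamCoverable T (Ico 0 s) {y | dOmZ T (Icc (-M) M) z y ≤ δ / 2} (4 * ε)
        (Real.exp (H * s)) := by
  choose m s hs hcover using fun x => exists_diamCoverable_of_entS_lt hδ hε x (hH x)
  let W : X → Set X := fun x =>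
    ⋂ n ∈ Icc (-(m x : ℤ)) (m x), {z | dist ((T.toEquiv ^ n) x) ((T.toEquiv ^ n) z) < δ / 2}
  obtain ⟨F, -, hF⟩ := (isCompact_univ (X := X)).elim_nhds_subcover W fun x _ =>
    ((finite_Icc _ _).isOpen_biInter fun n _ =>
      isOpen_lt (continuous_const.dist (T.continuous_toEquiv_zpow n)) continuous_const).mem_nhds
      (mem_iInter₂.2 fun n _ => by simpa using half_pos hδ)
  refine ⟨F.sup m, F.sup s, fun z => ?_⟩
  obtain ⟨x, hx, hzx⟩ := mem_iUnion₂.1 (hF (mem_univ z))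
  refine ⟨s x, hs x, Finset.le_sup hx, (hcover x).mono subset_rfl (fun y hy => ?_) le_rfl⟩
  have hmM : Icc (-(m x : ℤ)) (m x) ⊆ Icc (-((F.sup m : ℕ) : ℤ)) (F.sup m : ℕ) := by
    have := Finset.le_sup (f := m) hx
    exact Icc_subset_Icc (by omega) (by omega)
  calc dOmZ T (Icc (-(m x : ℤ)) (m x)) x y
      ≤ dOmZ T (Icc (-(m x : ℤ)) (m x)) x z + dOmZ T (Icc (-(m x : ℤ)) (m x)) z y :=
        dOmZ_triangle T _ x z y
    _ ≤ δ / 2 + δ / 2 := add_le_add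
        ((dOmZ_le_iff T (half_pos hδ).le).2 fun n hn => (mem_iInter₂.1 hzx n hn).le)
        ((dOmZ_mono T hmM z y).trans hy)
    _ = δ := add_halves δ

end Local

section Tube

variable {X : Type*} [MetricSpace X] [BoundedSpace X] [Nonempty X] {T : X ≃ₜ X}

lemma diamCoverable_tube_Ico {δ r H : ℝ} {M L N : ℕ} {A : Finset X}
    (hA : ∀ x : X, ∃ a ∈ A, dist x a ≤ r / 2) (hr : 0 ≤ r) (hH : 0 ≤ H)
    (hloc : ∀ z : X, ∃ s : ℕ, 1 ≤ s ∧ s ≤ L ∧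
      DiamCoverable T (Ico 0 s) {y | dOmZ T (Icc (-M) M) z y ≤ δ} r (Real.exp (H * s)))
    (w : X) (k t : ℕ) (hMt : M ≤ t) (hN : t + k = N) :
    DiamCoverable T (Ico t N) {y | dN T N w y ≤ δ} r
      ((A.card : ℝ) ^ (M + L) * Real.exp (H * k)) := by
  induction k using Nat.strong_induction_on generalizing t with
  | _ k ih =>
  by_cases hk : k ≤ M + L
  · refine (diamCoverable_Ico_of_net hA hr t N _).mono subset_rfl subset_rfl
      ((pow_le_pow_right₀ (one_le_card_of_forall_exists_dist_le hA) (by omega)).trans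
        (le_mul_of_one_le_right (by positivity) (Real.one_le_exp (by positivity))))
  -- a block `[t, t + s)` read off at `Tᵗ w`: the window `[t - M, t + M]` lies inside `[0, N)`
  obtain ⟨s, hs1, hsL, hblock⟩ := hloc ((T.toEquiv ^ (t : ℤ)) w)
  have hK : {y | dN T N w y ≤ δ} ⊆ (T.toEquiv ^ (t : ℤ)) ⁻¹'
      {y | dOmZ T (Icc (-M) M) ((T.toEquiv ^ (t : ℤ)) w) y ≤ δ} :=
    fun y hy => (dOmZ_zpow_le T (Ω := Icc (-M) M) (Ω' := Ico 0 N)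
      (fun n ⟨h₁, h₂⟩ => ⟨by omega, by omega⟩) w y).trans hy
  have hblock' := (hblock.preimage_zpow (Ω' := Ico (t : ℤ) (t + s))
    (fun n ⟨h₁, h₂⟩ => ⟨by omega, by omega⟩)).mono subset_rfl hK le_rfl
  refine (hblock'.union (ih (k - s) (by omega) (t + s) (by omega) (by omega)) hr).mono
    (fun n hn => ?_) subset_rfl (le_of_eq ?_)
  · simp only [mem_union, mem_Ico] at hn ⊢
    omega
  · rw [Nat.cast_sub (by omega), mul_left_comm, ← Real.exp_add]
    ring_nf

lemma diamCoverable_tube {δ r H : ℝ} {M L : ℕ} {A : Finset X}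
    (hA : ∀ x : X, ∃ a ∈ A, dist x a ≤ r / 2) (hr : 0 ≤ r) (hH : 0 ≤ H)
    (hloc : ∀ z : X, ∃ s : ℕ, 1 ≤ s ∧ s ≤ L ∧
      DiamCoverable T (Ico 0 s) {y | dOmZ T (Icc (-M) M) z y ≤ δ} r (Real.exp (H * s)))
    (N : ℕ) (w : X) :
    DiamCoverable T (Ico 0 N) {y | dN T N w y ≤ δ} r
      ((A.card : ℝ) ^ (2 * M + L) * Real.exp (H * N)) := by
  have hA1 := one_le_card_of_forall_exists_dist_le hA
  rcases le_or_gt M N with hMN | hNM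
  · refine ((diamCoverable_Ico_of_net hA hr 0 M _).union
      (diamCoverable_tube_Ico hA hr hH hloc w (N - M) M le_rfl (by omega)) hr).mono
      (fun n hn => ?_) subset_rfl ?_
    · simp only [mem_union, mem_Ico] at hn ⊢
      omega
    · rw [sub_zero, Int.toNat_natCast, ← mul_assoc, ← pow_add,
        show M + (M + L) = 2 * M + L by ring]
      gcongr
      exact_mod_cast Nat.sub_le N M
  · refine (diamCoverable_Ico_of_net hA hr 0 N _).mono subset_rfl subset_rfl ?_
    rw [sub_zero, Int.toNat_natCast]
    exact (pow_le_pow_right₀ hA1 (by omega)).trans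
      (le_mul_of_one_le_right (by positivity) (Real.one_le_exp (by positivity)))

end Tube

section BowenInequality

variable {X : Type*} [MetricSpace X] [CompactSpace X] {T : X ≃ₜ X}

lemma spanNum_le_spanNum_mul {δ r B : ℝ} (hδ : 0 < δ) (N : ℕ)
    (htube : ∀ w : X, DiamCoverable T (Ico 0 N) {y | dN T N w y ≤ δ} r B) :
    (spanNum (dN T N) univ r : ℝ) ≤ spanNum (dN T N) univ δ * B := by
  obtain ⟨S, hS⟩ := exists_finset_dN_le (T := T) hδ N
  obtain ⟨W, hWcard, hW⟩ := exists_card_eq_spanNum (K := univ) S fun x _ => hS x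
  have hcover : univ ⊆ ⋃ w ∈ W, {y | dN T N w y ≤ δ} := fun y _ => by
    obtain ⟨w, hw, hyw⟩ := hW y trivial
    exact mem_iUnion₂.2 ⟨w, hw, by rwa [mem_ofPred_eq, dN, dOmZ_comm]⟩
  rw [← hWcard]
  exact spanNum_le_of_diamCoverable
    ((DiamCoverable.biUnion fun w _ => htube w).mono subset_rfl hcover le_rfl)

lemma spanNum_dN_univ_pos [Nonempty X] {r : ℝ} (hr : 0 < r) (N : ℕ) :
    0 < spanNum (dN T N) univ r := by
  obtain ⟨S, hS⟩ := exists_finset_dN_le (T := T) hr N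
  exact spanNum_pos univ_nonempty S fun x _ => hS x

lemma log_spanNum_le_log_spanNum_add [Nonempty X] {δ r B : ℝ} (hδ : 0 < δ) (hr : 0 < r)
    (hB : 0 < B) (N : ℕ)
    (htube : ∀ w : X, DiamCoverable T (Ico 0 N) {y | dN T N w y ≤ δ} r B) :
    Real.log (spanNum (dN T N) univ r) ≤ Real.log (spanNum (dN T N) univ δ) + Real.log B := by
  have hδN : (0 : ℝ) < spanNum (dN T N) univ δ := by exact_mod_cast spanNum_dN_univ_pos hδ N
  rw [← Real.log_mul hδN.ne' hB.ne']
  exact Real.log_le_log (by exact_mod_cast spanNum_dN_univ_pos hr N)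
    (spanNum_le_spanNum_mul hδ N htube)

lemma entS_le_entS_add_of_forall_entS_lt [Nonempty X] {δ ε H : ℝ} (hδ : 0 < δ) (hε : 0 < ε)
    (hH : ∀ x, entS T (bowenBallZ T δ x) ε < H) :
    entS T univ (4 * ε) ≤ entS T univ (δ / 2) + H := by
  have hH0 : 0 ≤ H := (entS_nonneg _ _).trans (hH (Classical.arbitrary X)).le
  have h4ε : 0 < 4 * ε := by positivity
  obtain ⟨M, L, hloc⟩ := exists_uniform_diamCoverable hδ hε hH
  obtain ⟨A, hA⟩ := exists_finset_dist_le (X := X) (half_pos h4ε)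
  have hA0 : (0 : ℝ) < A.card := one_pos.trans_le (one_le_card_of_forall_exists_dist_le hA)
  have hlog : ∀ N : ℕ, 1 ≤ N → Real.log (spanNum (dN T N) univ (4 * ε)) / N ≤
      Real.log (spanNum (dN T N) univ (δ / 2)) / N +
        (((2 * M + L : ℕ) : ℝ) * Real.log A.card / N + H) := by
    intro N hN
    have h := log_spanNum_le_log_spanNum_add (half_pos hδ) h4ε (by positivity) N
      (diamCoverable_tube hA h4ε.le hH0 hloc N)
    rw [Real.log_mul (by positivity) (by positivity), Real.log_pow, Real.log_exp] at h
    have hN0 : (0 : ℝ) < N := by exact_mod_cast hN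
    calc Real.log (spanNum (dN T N) univ (4 * ε)) / N
        ≤ (Real.log (spanNum (dN T N) univ (δ / 2)) +
            (((2 * M + L : ℕ) : ℝ) * Real.log A.card + H * N)) / N :=
          div_le_div_of_nonneg_right h hN0.le
      _ = _ := by field_simp
  have hw : Tendsto (fun N : ℕ => ((2 * M + L : ℕ) : ℝ) * Real.log A.card / N + H) atTop
      (𝓝 H) := by
    simpa using (tendsto_const_div_atTop_nhds_zero_nat _).add_const H
  exact limsup_le_limsup_add_of_tendsto ((eventually_ge_atTop 1).mono hlog)
    (isCoboundedUnder_log_spanNum_div _ _) (isBoundedUnder_log_spanNum_div _ (half_pos hδ))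
    (isBoundedUnder_of ⟨0, log_spanNum_div_nonneg _ _⟩) hw

lemma entS_le_entS_add_iSup {δ ε : ℝ} (hδ : 0 < δ) (hε : 0 < ε) :
    entS T univ (4 * ε) ≤ entS T univ (δ / 2) + ⨆ x, entS T (bowenBallZ T δ x) ε := by
  rcases isEmpty_or_nonempty X with hX | hX
  · simp [entS_of_isEmpty]
  obtain ⟨A, hA⟩ := exists_finset_dist_le (X := X) (half_pos hε)
  have hbdd : BddAbove (range fun x => entS T (bowenBallZ T δ x) ε) :=
    ⟨_, forall_mem_range.2 fun x => entS_le_log_card hA hε.le _⟩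
  refine le_of_forall_pos_le_add fun a ha => ?_
  have := entS_le_entS_add_of_forall_entS_lt hδ hε
    fun x => (le_ciSup hbdd x).trans_lt (lt_add_of_pos_right _ ha)
  linarith

lemma entS_div_log_le {δ ε : ℝ} (hδ : 0 < δ) (hε₀ : 0 < ε) (hε₁ : ε < 1) :
    entS T univ ε / Real.log (1 / ε) ≤
      Real.log (1 / (ε / 4)) / Real.log (1 / ε) *
          ((⨆ x, entS T (bowenBallZ T δ x) (ε / 4)) / Real.log (1 / (ε / 4))) +
        entS T univ (δ / 2) / Real.log (1 / ε) := by
  have hL : 0 < Real.log (1 / ε) := Real.log_pos ((one_lt_div hε₀).2 hε₁)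
  have hL4 : 0 < Real.log (1 / (ε / 4)) :=
    Real.log_pos ((one_lt_div (by positivity)).2 (by linarith))
  have h := entS_le_entS_add_iSup (T := T) hδ (by positivity : 0 < ε / 4)
  rw [mul_div_cancel₀ ε four_ne_zero] at h
  rw [show ∀ s, Real.log (1 / (ε / 4)) / Real.log (1 / ε) * (s / Real.log (1 / (ε / 4))) =
    s / Real.log (1 / ε) from fun s => by rw [mul_comm, div_mul_div_cancel₀ hL4.ne'],
    ← add_div, add_comm]
  exact div_le_div_of_nonneg_right h hL.le

end BowenInequality

/-- Main result: local nature of metric mean dimension. -/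
theorem stmt3 {X : Type*} [MetricSpace X] [CompactSpace X] (T : X ≃ₜ X)
    (δ : ℝ) (hδ : 0 < δ) :
    mdimMUpper T =
      limsup (fun ε : ℝ => (⨆ x : X, entS T (bowenBallZ T δ x) ε) / Real.log (1 / ε))
        (nhdsWithin 0 (Set.Ioi 0)) ∧
    mdimMLower T =
      liminf (fun ε : ℝ => (⨆ x : X, entS T (bowenBallZ T δ x) ε) / Real.log (1 / ε))
        (nhdsWithin 0 (Set.Ioi 0)) := by
  have hIoo : ∀ᶠ ε in 𝓝[>] (0 : ℝ), ε ∈ Ioo 0 1 := Ioo_mem_nhdsGT one_pos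
  have hlog : ∀ᶠ ε in 𝓝[>] (0 : ℝ), 0 ≤ Real.log (1 / ε) := hIoo.mono fun ε hε =>
    Real.log_nonneg ((one_le_div hε.1).2 hε.2.le)
  have hsup_le : ∀ ε > 0, (⨆ x, entS T (bowenBallZ T δ x) ε) ≤ entS T univ ε :=
    fun ε hε => Real.iSup_le (fun x => entS_mono (subset_univ _) hε) (entS_nonneg _ _)
  refine limsup_eq_and_liminf_eq_of_le_mul_comp_add (map_div_const_nhdsGT_zero four_pos) ?_ ?_
    ?_ (tendsto_log_one_div_div_const_div_log_one_div four_pos)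
    ((tendsto_const_nhds (x := entS T univ (δ / 2))).div_atTop tendsto_log_one_div_nhdsGT_zero)
  · filter_upwards [hlog] with ε hε
    exact div_nonneg (Real.iSup_nonneg fun x => entS_nonneg _ _) hε
  · filter_upwards [hIoo, hlog] with ε hε hεlog
    exact div_le_div_of_nonneg_right (hsup_le ε hε.1) hεlog
  · filter_upwards [hIoo] with ε hε
    exact entS_div_log_le hδ hε.1 hε.2
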